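/- arXiv:2303.05356 — 3 statements merged into one kernel-verified Lean document; each statement's English description precedes it below -/
import Mathlib

section
/- Let H be an n-vertex digraph and k a positive integer such that for every two disjoint sets S, T ⊆ V(H) of size k there exists an edge directed from S to T. Then H contains a directed path with at least n − 2k + 2 vertices. -/
/-!
Run a depth-first search on `H`, keeping the finished vertices `F`, the stack `A` (a directed
path) and the unvisited vertices `U`. No edge ever leads from `F` to `U`, so by hypothesis
`|F| < k` or `|U| < k`. Each step either pushes a vertex of `U` or moves the top of the stack
to `F`; follow it until `|U| < k`. As long as `|U| ≥ k` this forces `|F| < k`, so at the end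
the stack has at least `n - 2(k - 1)` vertices.
-/

open Finset

open Classical in
def IsNDLGraph (n d : ℕ) (lam : ℝ) (G : SimpleGraph (Fin n)) : Prop :=
  G.IsRegularOfDegree d ∧ 0 ≤ lam ∧
    ∀ μ : ℝ, Module.End.HasEigenvalue (Matrix.toLin' (G.adjMatrix ℝ)) μ → μ = (d : ℝ) ∨ |μ| ≤ lam

theorem card_lt_or_card_lt_of_forall_not_rel {V : Type*} {H : V → V → Prop} {k : ℕ}
    (hH : ∀ S T : Finset V, Disjoint S T → S.card = k → T.card = k → ∃ s ∈ S, ∃ t ∈ T, H s t)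
    {S T : Finset V} (hST : Disjoint S T) (hno : ∀ s ∈ S, ∀ t ∈ T, ¬ H s t) :
    S.card < k ∨ T.card < k := by
  by_contra! hbig
  obtain ⟨S', hS'S, hS'⟩ := exists_subset_card_eq hbig.1
  obtain ⟨T', hT'T, hT'⟩ := exists_subset_card_eq hbig.2
  obtain ⟨s, hs, t, ht, hst⟩ := hH S' T' (hST.mono hS'S hT'T) hS' hT'
  exact hno s (hS'S hs) t (hT'T ht) hst

namespace DFS

variable {V : Type*} [Fintype V] [DecidableEq V] {H : V → V → Prop} {F : Finset V} {A : List V}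

def unvisited (F : Finset V) (A : List V) : Finset V := (F ∪ A.toFinset)ᶜ

@[simp]
theorem mem_unvisited {u : V} : u ∈ unvisited F A ↔ u ∉ F ∧ u ∉ A := by
  simp [unvisited]

theorem disjoint_unvisited : Disjoint F (unvisited F A) :=
  disjoint_compl_right.mono_left subset_union_left

theorem unvisited_cons (u : V) : unvisited F (u :: A) = (unvisited F A).erase u := by
  ext; simp; tauto

theorem unvisited_insert (v : V) : unvisited (insert v F) A = unvisited F (v :: A) := by
  ext; simp; tauto

/-- The stack `A` lists the current path top first, so it is a path of `H` read backwards. -/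
structure IsState (H : V → V → Prop) (F : Finset V) (A : List V) : Prop where
  nodup : A.Nodup
  isChain : A.IsChain (flip H)
  disjoint : Disjoint F A.toFinset
  forall_not_rel : ∀ f ∈ F, ∀ u ∈ unvisited F A, ¬ H f u

theorem isState_empty : IsState H ∅ [] where
  nodup := List.nodup_nil
  isChain := List.IsChain.nil
  disjoint := disjoint_empty_left _
  forall_not_rel := by simp

theorem IsState.card_add_card_unvisited (h : IsState H F A) :
    F.card + A.length + (unvisited F A).card = Fintype.card V := by
  rw [unvisited, ← List.toFinset_card_of_nodup h.nodup, ← card_union_of_disjoint h.disjoint,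
    card_add_card_compl]

theorem IsState.push (h : IsState H F A) {u : V} (hu : u ∈ unvisited F A)
    (hedge : ∀ v ∈ A.head?, H v u) : IsState H F (u :: A) where
  nodup := List.nodup_cons.2 ⟨(mem_unvisited.1 hu).2, h.nodup⟩
  isChain := List.isChain_cons.2 ⟨hedge, h.isChain⟩
  disjoint := by
    rw [List.toFinset_cons, disjoint_insert_right]
    exact ⟨(mem_unvisited.1 hu).1, h.disjoint⟩
  forall_not_rel f hf w hw := by
    rw [unvisited_cons] at hw
    exact h.forall_not_rel f hf w (mem_of_mem_erase hw)

theorem IsState.pop {v : V} (h : IsState H F (v :: A))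
    (hv : ∀ u ∈ unvisited F (v :: A), ¬ H v u) : IsState H (insert v F) A where
  nodup := (List.nodup_cons.1 h.nodup).2
  isChain := (List.isChain_cons.1 h.isChain).2
  disjoint := by
    have := h.disjoint
    have := h.nodup
    simp_all [disjoint_insert_left]
  forall_not_rel f hf u hu := by
    rw [unvisited_insert] at hu
    rcases mem_insert.1 hf with rfl | hf
    · exact hv u hu
    · exact h.forall_not_rel f hf u hu

theorem IsState.exists_long_path {k : ℕ}
    (hH : ∀ S T : Finset V, Disjoint S T → (∀ s ∈ S, ∀ t ∈ T, ¬ H s t) → S.card < k ∨ T.card < k)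
    (h : IsState H F A) (hF : F.card < k) :
    ∃ p : List V, p.Nodup ∧ p.IsChain H ∧ Fintype.card V + 2 ≤ p.length + 2 * k := by
  induction hm : 2 * (unvisited F A).card + A.length using Nat.strong_induction_on
    generalizing F A with
  | _ m ih =>
  have hcard := h.card_add_card_unvisited
  by_cases hU : (unvisited F A).card < k
  · exact ⟨A.reverse, List.nodup_reverse.2 h.nodup, List.isChain_reverse.2 h.isChain, by
      rw [List.length_reverse]; omega⟩
  have push_step {u : V} (hu : u ∈ unvisited F A) (hedge : ∀ v ∈ A.head?, H v u) := by
    refine ih _ ?_ (h.push hu hedge) hF rfl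
    rw [← hm, unvisited_cons, card_erase_of_mem hu, List.length_cons]
    have := card_pos.2 ⟨u, hu⟩
    omega
  cases A with
  | nil =>
    obtain ⟨u, hu⟩ : (unvisited F []).Nonempty := card_pos.1 (by omega)
    exact push_step hu (by simp)
  | cons v A =>
    by_cases hnext : ∃ u ∈ unvisited F (v :: A), H v u
    · obtain ⟨u, hu, hvu⟩ := hnext
      exact push_step hu (by simpa using hvu)
    push Not at hnext
    have hpop := h.pop hnext
    have hsmall := hH _ _ disjoint_unvisited hpop.forall_not_rel
    rw [unvisited_insert] at hsmall
    refine ih _ ?_ hpop (by omega) rfl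
    rw [← hm, unvisited_insert, List.length_cons]
    omega

end DFS

theorem digraph_long_path_general (n k : ℕ) (H : Fin n → Fin n → Prop)
    (hH : ∀ S T : Finset (Fin n), Disjoint S T → S.card = k → T.card = k →
      ∃ s ∈ S, ∃ t ∈ T, H s t) :
    ∃ p : List (Fin n), p.Nodup ∧ p.Chain' H ∧ (n : ℤ) - 2 * k + 2 ≤ (p.length : ℤ) := by
  have hsmall (S T : Finset (Fin n)) : Disjoint S T → (∀ s ∈ S, ∀ t ∈ T, ¬ H s t) →
      S.card < k ∨ T.card < k :=
    card_lt_or_card_lt_of_forall_not_rel hH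
  have hk : 0 < k := by simpa using hsmall ∅ ∅ (disjoint_empty_left _) (by simp)
  obtain ⟨p, hnodup, hchain, hlength⟩ :=
    DFS.isState_empty.exists_long_path hsmall (by rwa [card_empty])
  rw [Fintype.card_fin] at hlength
  exact ⟨p, hnodup, hchain, by omega⟩

theorem digraph_long_path (n k : ℕ) (hk : 0 < k) (H : Fin n → Fin n → Prop)
    (hH : ∀ S T : Finset (Fin n), Disjoint S T → S.card = k → T.card = k →
      ∃ s ∈ S, ∃ t ∈ T, H s t) :
    ∃ p : List (Fin n), p.Nodup ∧ p.Chain' H ∧ (n : ℤ) - 2 * k + 2 ≤ (p.length : ℤ) :=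
  digraph_long_path_general n k H hH
end

section
/- Let G be a digraph and suppose that for every subdigraph H' of G with all out-degrees and in-degrees strictly less than r, the digraph G − E(H') satisfies |Γ⁺(S)| ≥ |S| for every S ⊆ V(G), where Γ⁺(S) is the set of out-neighbours of S. Then G contains r pairwise edge-disjoint spanning 1-regular subdigraphs (i.e., a spanning r-regular subdigraph, counting in- and out-degree r each). -/
open Finset

/-- The out-degree of a vertex `v` in the digraph with edge set `E`. -/
def outDeg {V : Type*} [DecidableEq V] (E : Finset (V × V)) (v : V) : ℕ :=
  (E.filter fun e => e.1 = v).card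

/-- The in-degree of a vertex `v` in the digraph with edge set `E`. -/
def inDeg {V : Type*} [DecidableEq V] (E : Finset (V × V)) (v : V) : ℕ :=
  (E.filter fun e => e.2 = v).card

lemma hall_step {V : Type*} [Fintype V] [DecidableEq V] (E : Finset (V × V))
    (hall : ∀ S : Finset V, S.card ≤ ((E.filter fun e => e.1 ∈ S).image Prod.snd).card) :
    ∃ M ⊆ E, ∀ v, outDeg M v = 1 ∧ inDeg M v = 1 := by
  have key : ∀ S : Finset V,
      S.card ≤ (S.biUnion fun a => (E.filter fun e => e.1 = a).image Prod.snd).card := by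
    intro S
    refine le_trans (hall S) (le_of_eq ?_)
    congr 1
    ext b
    simp only [mem_image, mem_filter, mem_biUnion]
    constructor
    · rintro ⟨e, ⟨he, hS⟩, rfl⟩
      exact ⟨e.1, hS, e, ⟨he, rfl⟩, rfl⟩
    · rintro ⟨a, haS, e, ⟨he, ha⟩, rfl⟩
      exact ⟨e, ⟨he, ha ▸ haS⟩, rfl⟩
  obtain ⟨f, hfinj, hf⟩ := (Finset.all_card_le_biUnion_card_iff_existsInjective' _).1 key
  have hfbij : Function.Bijective f := Finite.injective_iff_bijective.1 hfinj
  refine ⟨univ.image fun v => (v, f v), ?_, ?_⟩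
  · intro e he
    simp only [mem_image, mem_univ, true_and] at he
    obtain ⟨a, rfl⟩ := he
    have := hf a
    simp only [mem_image, mem_filter] at this
    obtain ⟨e, ⟨he, h1⟩, h2⟩ := this
    have : e = (a, f a) := Prod.ext h1 h2
    exact this ▸ he
  · intro v
    constructor
    · rw [outDeg, Finset.card_eq_one]
      refine ⟨(v, f v), ?_⟩
      ext e
      simp only [mem_filter, mem_image, mem_univ, true_and, mem_singleton]
      constructor
      · rintro ⟨⟨a, rfl⟩, h⟩
        simp_all
      · rintro rfl
        exact ⟨⟨v, rfl⟩, rfl⟩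
    · rw [inDeg, Finset.card_eq_one]
      obtain ⟨a, ha⟩ := hfbij.2 v
      refine ⟨(a, v), ?_⟩
      ext e
      simp only [mem_filter, mem_image, mem_univ, true_and, mem_singleton]
      constructor
      · rintro ⟨⟨b, rfl⟩, h⟩
        simp only at h
        exact Prod.ext (hfinj (h.trans ha.symm)) h
      · rintro rfl
        exact ⟨⟨a, ha ▸ rfl⟩, rfl⟩

theorem regular_spanning_subdigraph {V : Type*} [Fintype V] [DecidableEq V]
    (G : Finset (V × V)) (r : ℕ)
    (hexp : ∀ H' ⊆ G, (∀ v, outDeg H' v < r ∧ inDeg H' v < r) →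
      ∀ S : Finset V, S.card ≤ (((G \ H').filter fun e => e.1 ∈ S).image Prod.snd).card) :
    ∃ F : Fin r → Finset (V × V), (∀ i, F i ⊆ G) ∧
      (∀ i j, i ≠ j → Disjoint (F i) (F j)) ∧
      ∀ i v, outDeg (F i) v = 1 ∧ inDeg (F i) v = 1 := by
  suffices h : ∀ k, k ≤ r → ∃ F : Fin k → Finset (V × V), (∀ i, F i ⊆ G) ∧
      (∀ i j, i ≠ j → Disjoint (F i) (F j)) ∧
      ∀ i v, outDeg (F i) v = 1 ∧ inDeg (F i) v = 1 from h r le_rfl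
  intro k
  induction k with
  | zero => exact fun _ => ⟨fun i => ∅, fun i => i.elim0, fun i => i.elim0, fun i => i.elim0⟩
  | succ k ih =>
    intro hk
    obtain ⟨F, hsub, hdisj, hreg⟩ := ih (Nat.le_of_succ_le hk)
    set H' : Finset (V × V) := univ.biUnion F with hH'
    have hdisj' : ∀ x ∈ (univ : Finset (Fin k)), ∀ y ∈ (univ : Finset (Fin k)), x ≠ y →
        Disjoint (F x) (F y) := fun x _ y _ h => hdisj x y h
    have hH'sub : H' ⊆ G := by
      intro e he
      simp only [hH', mem_biUnion, mem_univ, true_and] at he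
      obtain ⟨i, hi⟩ := he
      exact hsub i hi
    have hdeg : ∀ v, outDeg H' v < r ∧ inDeg H' v < r := by
      intro v
      have ho : outDeg H' v = k := by
        have h1 : ∀ i : Fin k, ((F i).filter fun e => e.1 = v).card = 1 :=
          fun i => (hreg i v).1
        rw [outDeg, hH', filter_biUnion, card_biUnion]
        · simp [h1]
        · intro x _ y _ hxy
          exact (hdisj x y hxy).mono (filter_subset _ _) (filter_subset _ _)
      have hi : inDeg H' v = k := by
        have h1 : ∀ i : Fin k, ((F i).filter fun e => e.2 = v).card = 1 :=
          fun i => (hreg i v).2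
        rw [inDeg, hH', filter_biUnion, card_biUnion]
        · simp [h1]
        · intro x _ y _ hxy
          exact (hdisj x y hxy).mono (filter_subset _ _) (filter_subset _ _)
      exact ⟨ho ▸ hk, hi ▸ hk⟩
    obtain ⟨M, hMsub, hMreg⟩ := hall_step (G \ H') (hexp H' hH'sub hdeg)
    have hMG : M ⊆ G := hMsub.trans (sdiff_subset)
    have hMdisj : ∀ i, Disjoint M (F i) := by
      intro i
      refine Finset.disjoint_left.2 fun e he hei => ?_
      have := hMsub he
      rw [mem_sdiff] at this
      exact this.2 (mem_biUnion.2 ⟨i, mem_univ i, hei⟩)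
    refine ⟨Fin.snoc F M, ?_, ?_, ?_⟩
    · intro i
      refine Fin.lastCases ?_ ?_ i
      · simpa using hMG
      · intro j; simpa using hsub j
    · intro i j hij
      induction i using Fin.lastCases with
      | last =>
        induction j using Fin.lastCases with
        | last => simp at hij
        | cast j' => simpa using hMdisj j'
      | cast i' =>
        induction j using Fin.lastCases with
        | last => simpa using (hMdisj i').symm
        | cast j' =>
          have hne : i' ≠ j' := fun h => hij (by rw [h])
          simpa using hdisj i' j' hne
    · intro i v
      refine Fin.lastCases ?_ ?_ i
      · simpa using hMreg v
      · intro j; simpa using hreg j v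
end

section
/- Let G be an n-vertex graph such that for every two disjoint subsets S, T of V(G) of size k there is an edge between them, and let M be a collection of disjoint pairs of vertices of G (possibly with repeated vertices, i.e. pairs {x,x}). Then the graph G ∪ M (obtained by adding all edges xy for distinct pairs {x,y} ∈ M) contains an M-alternating path which uses all but at most 2k − 1 pairs of M. -/
open Finset

/-!
Depth-first search, growing the path backwards. Keep an `M`-alternating path `P`, the unvisited
pairs `U` and the dead pairs `D`. If some pair of `U` can be put in front of `P`, do so; otherwise
move the first pair of `P` to `D`, recording the vertex at which `P` started. That vertex has no
neighbour in any pair of `U`, and `U` only shrinks afterwards. Hence once `|D| = k`, the `k`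
recorded vertices and one vertex from each of `k` unvisited pairs would form disjoint `k`-sets
with no edge between them, so `|U| < k` and `P` misses at most `|U| + |D| ≤ 2k - 1` pairs. If
instead `U` runs out first, `P` misses fewer than `k` pairs.
-/

variable {V : Type*}

def SimpleGraph.IsJoined (G : SimpleGraph V) (k : ℕ) : Prop :=
  ∀ S T : Finset V, Disjoint S T → S.card = k → T.card = k →
    ∃ s ∈ S, ∃ t ∈ T, G.Adj s t

def PairwiseVertexDisjoint (M : Finset (Sym2 V)) : Prop :=
  ∀ e ∈ M, ∀ f ∈ M, ∀ v ∈ e, v ∈ f → e = f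

namespace PairwiseVertexDisjoint

variable {M S T : Finset (Sym2 V)}

theorem injOn (hM : PairwiseVertexDisjoint M) (hS : S ⊆ M) {f : Sym2 V → V}
    (hf : ∀ e ∈ S, f e ∈ e) : Set.InjOn f S := fun e he e' he' hee' =>
  hM e (hS he) e' (hS he') (f e) (hf e he) (hee' ▸ hf e' he')

theorem disjoint_image [DecidableEq V] (hM : PairwiseVertexDisjoint M) (hS : S ⊆ M)
    (hT : T ⊆ M) (hST : Disjoint S T) {f g : Sym2 V → V} (hf : ∀ e ∈ S, f e ∈ e)
    (hg : ∀ e ∈ T, g e ∈ e) :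
    Disjoint (S.image f) (T.image g) := by
  simp only [disjoint_left, mem_image]
  rintro _ ⟨e, he, rfl⟩ ⟨e', he', hfe⟩
  have hee' : e = e' := hM e (hS he) e' (hT he') (f e) (hf e he) (hfe ▸ hg e' he')
  exact disjoint_left.1 hST he (hee' ▸ he')

end PairwiseVertexDisjoint

/-- A pair `p` in `l` traverses `s(p.1, p.2) ∈ M` from `p.1` to `p.2`; a loop `s(x, x)` is a
single vertex of the path. -/
structure IsAlternatingPath (G : SimpleGraph V) (M : Finset (Sym2 V)) (l : List (V × V)) :
    Prop where
  mem : ∀ p ∈ l, s(p.1, p.2) ∈ M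
  nodup : (l.map fun p => s(p.1, p.2)).Nodup
  isChain : l.IsChain fun p q => G.Adj p.2 q.1

/-- A state of the depth-first search: the pairs of `M` are unvisited (`U`), dead (`D`), or on the
current path `P`. -/
structure DfsInvariant (G : SimpleGraph V) (M U D : Finset (Sym2 V)) (P : List (V × V)) :
    Prop where
  path : IsAlternatingPath G M P
  unvisited_subset : U ⊆ M
  dead_subset : D ⊆ M
  disjoint : Disjoint U D
  notMem_of_mem_path : ∀ p ∈ P, s(p.1, p.2) ∉ U ∧ s(p.1, p.2) ∉ D
  card_le : M.card ≤ U.card + D.card + P.length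
  dead_isolated : ∀ e ∈ D, ∃ v ∈ e, ∀ f ∈ U, ∀ w ∈ f, ¬ G.Adj v w

namespace DfsInvariant

variable {G : SimpleGraph V} {M U D : Finset (Sym2 V)} {P : List (V × V)} {k : ℕ}

theorem init : DfsInvariant G M M ∅ [] where
  path := ⟨by simp, by simp, .nil⟩
  unvisited_subset := subset_rfl
  dead_subset := empty_subset M
  disjoint := disjoint_empty_right M
  notMem_of_mem_path := by simp
  card_le := by simp
  dead_isolated := by simp

variable [DecidableEq V]

theorem push (h : DfsInvariant G M U D P) {q : V × V} (hq : s(q.1, q.2) ∈ U)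
    (hadj : ∀ p ∈ P.head?, G.Adj q.2 p.1) :
    DfsInvariant G M (U.erase s(q.1, q.2)) D (q :: P) where
  path :=
    { mem := List.forall_mem_cons.2 ⟨h.unvisited_subset hq, h.path.mem⟩
      nodup := by
        simp only [List.map_cons, List.nodup_cons, List.mem_map, not_exists, not_and]
        exact ⟨fun p hp hpq => (h.notMem_of_mem_path p hp).1 (hpq ▸ hq), h.path.nodup⟩
      isChain := List.isChain_cons.2 ⟨hadj, h.path.isChain⟩ }
  unvisited_subset := (erase_subset _ _).trans h.unvisited_subset
  dead_subset := h.dead_subset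
  disjoint := disjoint_of_subset_left (erase_subset _ _) h.disjoint
  notMem_of_mem_path p hp := by
    rcases List.mem_cons.1 hp with rfl | hp
    · exact ⟨notMem_erase _ _, disjoint_left.1 h.disjoint hq⟩
    · exact ⟨fun hpU => (h.notMem_of_mem_path p hp).1 (mem_of_mem_erase hpU),
        (h.notMem_of_mem_path p hp).2⟩
  card_le := by
    have := card_erase_add_one hq
    have := h.card_le
    simp only [List.length_cons]
    omega
  dead_isolated e he := by
    obtain ⟨v, hv, hiso⟩ := h.dead_isolated e he
    exact ⟨v, hv, fun f hf => hiso f (mem_of_mem_erase hf)⟩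

theorem pop (h : DfsInvariant G M U D P) {p : V × V} (hp : P.head? = some p)
    (hiso : ∀ f ∈ U, ∀ w ∈ f, ¬ G.Adj p.1 w) :
    DfsInvariant G M U (insert s(p.1, p.2) D) P.tail := by
  obtain ⟨P, rfl⟩ := List.head?_eq_some_iff.1 hp
  obtain ⟨hpP, hP⟩ := List.nodup_cons.1 h.path.nodup
  obtain ⟨hpU, hpD⟩ := h.notMem_of_mem_path p List.mem_cons_self
  have hcard := card_insert_of_notMem hpD
  have hcard' := h.card_le
  simp only [List.length_cons] at hcard'
  exact
    { path := ⟨fun q hq => h.path.mem q (List.mem_cons_of_mem p hq), hP, h.path.isChain.tail⟩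
      unvisited_subset := h.unvisited_subset
      dead_subset := insert_subset (h.path.mem p List.mem_cons_self) h.dead_subset
      disjoint := disjoint_insert_right.2 ⟨hpU, h.disjoint⟩
      notMem_of_mem_path := fun q hq => by
        have hpq : s(q.1, q.2) ≠ s(p.1, p.2) := fun hpq => hpP (List.mem_map.2 ⟨q, hq, hpq⟩)
        simpa [hpq] using h.notMem_of_mem_path q (List.mem_cons_of_mem p hq)
      card_le := by simp only [List.tail_cons]; omega
      dead_isolated := fun e he => by
        rcases mem_insert.1 he with rfl | he
        · exact ⟨p.1, Sym2.mem_mk_left _ _, hiso⟩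
        · exact h.dead_isolated e he }

theorem card_unvisited_lt (h : DfsInvariant G M U D P) (hG : G.IsJoined k)
    (hM : PairwiseVertexDisjoint M) (hk : k ≤ D.card) : U.card < k := by
  by_contra! hU
  obtain ⟨D', hD', hD'k⟩ := exists_subset_card_eq hk
  obtain ⟨U', hU', hU'k⟩ := exists_subset_card_eq hU
  have hexists (e : Sym2 V) : ∃ v ∈ e, e ∈ D → ∀ f ∈ U, ∀ w ∈ f, ¬ G.Adj v w :=
    if he : e ∈ D then (h.dead_isolated e he).imp fun _ ⟨hv, hiso⟩ => ⟨hv, fun _ => hiso⟩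
    else ⟨e.out.1, Sym2.out_fst_mem e, (absurd · he)⟩
  choose exit hexit_mem hexit using hexists
  have hexit_mem' : ∀ e ∈ D', exit e ∈ e := fun e _ => hexit_mem e
  have hout_mem : ∀ e ∈ U', e.out.1 ∈ e := fun e _ => Sym2.out_fst_mem e
  have hD'M := hD'.trans h.dead_subset
  have hU'M := hU'.trans h.unvisited_subset
  have hD'U' : Disjoint D' U' :=
    disjoint_of_subset_left hD' (disjoint_of_subset_right hU' h.disjoint.symm)
  obtain ⟨_, hv, _, hw, hvw⟩ := hG (D'.image exit) (U'.image fun e => e.out.1)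
    (hM.disjoint_image hD'M hU'M hD'U' hexit_mem' hout_mem)
    (by rw [card_image_of_injOn (hM.injOn hD'M hexit_mem'), hD'k])
    (by rw [card_image_of_injOn (hM.injOn hU'M hout_mem), hU'k])
  obtain ⟨e, he, rfl⟩ := mem_image.1 hv
  obtain ⟨f, hf, rfl⟩ := mem_image.1 hw
  exact hexit e (hD' he) f (hU' hf) _ (Sym2.out_fst_mem f) hvw

theorem exists_isAlternatingPath {U D : Finset (Sym2 V)} {P : List (V × V)}
    (h : DfsInvariant G M U D P) (hG : G.IsJoined k)
    (hM : PairwiseVertexDisjoint M) (hDk : D.card ≤ k) :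
    ∃ l, IsAlternatingPath G M l ∧ M.card ≤ l.length + (2 * k - 1) := by
  have hcard := h.card_le
  rcases hDk.eq_or_lt with hDk | hDk
  · have := h.card_unvisited_lt hG hM hDk.ge
    exact ⟨P, h.path, by omega⟩
  rcases U.eq_empty_or_nonempty with rfl | ⟨e, he⟩
  · exact ⟨P, h.path, by simp only [card_empty] at hcard; omega⟩
  by_cases hext : ∃ q : V × V, s(q.1, q.2) ∈ U ∧ ∀ p ∈ P.head?, G.Adj q.2 p.1
  · obtain ⟨q, hqU, hadj⟩ := hext
    have := card_erase_add_one hqU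
    exact exists_isAlternatingPath (h.push hqU hadj) hG hM hDk.le
  obtain ⟨p, hp⟩ : ∃ p, P.head? = some p := by
    refine Option.ne_none_iff_exists'.1 fun hP => hext ⟨e.out, ?_, by simp [hP]⟩
    rwa [show s(e.out.1, e.out.2) = e from Quot.out_eq e]
  have hpP := List.mem_of_mem_head? hp
  have := List.length_pos_of_mem hpP
  have := card_insert_of_notMem (h.notMem_of_mem_path p hpP).2
  refine exists_isAlternatingPath (h.pop hp fun f hf w hw hpw => hext ?_) hG hM (by omega)
  refine ⟨(Sym2.Mem.other hw, w), ?_, by simpa [hp] using hpw.symm⟩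
  rwa [Sym2.eq_swap, Sym2.other_spec hw]
termination_by 2 * U.card + P.length
decreasing_by all_goals (try simp only [List.length_cons, List.length_tail]); omega

end DfsInvariant

theorem exists_isAlternatingPath_card_le [DecidableEq V] {G : SimpleGraph V}
    {M : Finset (Sym2 V)} {k : ℕ} (hG : G.IsJoined k) (hM : PairwiseVertexDisjoint M) :
    ∃ l, IsAlternatingPath G M l ∧ M.card ≤ l.length + (2 * k - 1) :=
  DfsInvariant.init.exists_isAlternatingPath hG hM (by simp)

theorem Sym2.mk_ne_mk_iff {α : Type*} {p q : α × α} :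
    s(p.1, p.2) ≠ s(q.1, q.2) ↔ p ≠ q ∧ p ≠ q.swap ∧ p.swap ≠ q := by
  simp only [ne_eq, Sym2.mk_eq_mk_iff, Prod.swap_eq_iff_eq_swap]
  tauto

theorem alternating_path_covering_most_pairs (n k : ℕ) (G : SimpleGraph (Fin n))
    (hG : ∀ S T : Finset (Fin n), Disjoint S T → S.card = k → T.card = k →
      ∃ s ∈ S, ∃ t ∈ T, G.Adj s t)
    (M : Finset (Fin n × Fin n))
    (hM : ∀ p ∈ M, ∀ q ∈ M, p ≠ q →
      ∀ v : Fin n, (v = p.1 ∨ v = p.2) → ¬(v = q.1 ∨ v = q.2)) :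
    ∃ l : List (Fin n × Fin n),
      (∀ p ∈ l, p ∈ M ∨ p.swap ∈ M) ∧
      l.Pairwise (fun p q => p ≠ q ∧ p ≠ q.swap ∧ p.swap ≠ q) ∧
      l.Chain' (fun p q => G.Adj p.2 q.1) ∧
      M.card ≤ l.length + (2 * k - 1) := by
  have hshare : ∀ p ∈ M, ∀ q ∈ M, ∀ v ∈ s(p.1, p.2), v ∈ s(q.1, q.2) → p = q := by
    intro p hp q hq v hvp hvq
    by_contra hpq
    exact hM p hp q hq hpq v (Sym2.mem_iff.1 hvp) (Sym2.mem_iff.1 hvq)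
  have hinj : Set.InjOn (fun p : Fin n × Fin n => s(p.1, p.2)) M := fun p hp q hq hpq =>
    hshare p hp q hq p.1 (Sym2.mem_mk_left _ _)
      (by simp only at hpq; exact hpq ▸ Sym2.mem_mk_left _ _)
  have hdisj : PairwiseVertexDisjoint (M.image fun p => s(p.1, p.2)) := by
    simp only [PairwiseVertexDisjoint, mem_image]
    rintro _ ⟨p, hp, rfl⟩ _ ⟨q, hq, rfl⟩ v hvp hvq
    rw [hshare p hp q hq v hvp hvq]
  obtain ⟨l, hl, hcard⟩ := exists_isAlternatingPath_card_le hG hdisj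
  refine ⟨l, fun p hp => ?_, ?_, hl.isChain, ?_⟩
  · obtain ⟨q, hq, hqp⟩ := mem_image.1 (hl.mem p hp)
    rcases Sym2.mk_eq_mk_iff.1 hqp with rfl | rfl
    exacts [.inl hq, .inr hq]
  · simpa only [List.Nodup, List.pairwise_map, Sym2.mk_ne_mk_iff] using hl.nodup
  · rwa [card_image_of_injOn hinj] at hcard
end
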